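/- arXiv:2311.15919 — 4 statements merged into one kernel-verified Lean document; each statement's English description precedes it below -/
import Mathlib

section
/- The writer monad X ↦ M × X for a monoid M distributes over the coinductive delay monad D via the law that delays all output until termination: ζ(m, now x) = now(m,x) and ζ(m, step d) = step(ζ(m,d)). This ζ satisfies the distributive law axioms. -/
/-- The coinductive delay monad: `D X` is the final coalgebra of `Y ↦ X ⊕ Y`.
Concretely, an element of `D X` either diverges (`none`), or is of the form
`step^n (now x)`, represented as `some (n, x)`. -/
def Delay (X : Type) : Type := Option (ℕ × X)

namespace Delay

/-- `now : X → D X`. -/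
def now {X : Type} (x : X) : Delay X := some (0, x)

/-- `step : D X → D X`. -/
def step {X : Type} : Delay X → Delay X
  | none => none
  | some (n, x) => some (n + 1, x)

/-- The divergent computation, `fix step`. -/
def diverge {X : Type} : Delay X := none

/-- Functorial action of `D`. -/
def map {X Y : Type} (f : X → Y) : Delay X → Delay Y
  | none => none
  | some (n, x) => some (n, f x)

/-- Monad multiplication `μ : D(D X) → D X`, satisfying `μ (now d) = d` and
`μ (step d) = step (μ d)`. -/
def mu {X : Type} : Delay (Delay X) → Delay X
  | none => none
  | some (_, none) => none
  | some (n, some (m, x)) => some (n + m, x)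

end Delay

/-- The distributive law of the writer monad `X ↦ M × X` over the coinductive delay
monad, which delays all output until the computation terminates. -/
def zetaW {M X : Type} (p : M × Delay X) : Delay (M × X) :=
  Delay.map (fun x => (p.1, x)) p.2

/-- For a monoid `M`, the writer monad `X ↦ M × X` distributes over the coinductive delay
monad `D` via the law `ζ(m, now x) = now (m, x)`, `ζ(m, step d) = step (ζ(m, d))`:
these clauses hold for `zetaW`, and `zetaW` is natural and satisfies the two unit and two
multiplication axioms of a distributive law. -/
theorem writer_distributes_over_delay (M : Type) [Monoid M] :
    -- defining clauses
    (∀ (X : Type) (m : M) (x : X), zetaW (m, Delay.now x) = Delay.now (m, x)) ∧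
    (∀ (X : Type) (m : M) (d : Delay X),
        zetaW (m, Delay.step d) = Delay.step (zetaW (m, d))) ∧
    -- naturality
    (∀ (X Y : Type) (f : X → Y) (m : M) (d : Delay X),
        zetaW (m, Delay.map f d) = Delay.map (Prod.map id f) (zetaW (m, d))) ∧
    -- unit axioms
    (∀ (X : Type) (d : Delay X),
        zetaW ((1 : M), d) = Delay.map (fun x => ((1 : M), x)) d) ∧
    (∀ (X : Type) (m : M) (x : X), zetaW (m, Delay.now x) = Delay.now (m, x)) ∧
    -- multiplication axioms
    (∀ (X : Type) (m n : M) (d : Delay X),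
        zetaW (m * n, d)
          = Delay.map (fun p : M × (M × X) => (p.1 * p.2.1, p.2.2))
              (zetaW (m, zetaW (n, d)))) ∧
    (∀ (X : Type) (m : M) (dd : Delay (Delay X)),
        zetaW (m, Delay.mu dd)
          = Delay.mu (Delay.map (fun q : M × Delay X => zetaW q) (zetaW (m, dd)))) := by
  refine ⟨?_, ?_, ?_, ?_, ?_, ?_, ?_⟩
  · intro X m x; rfl
  · intro X m d; rcases d with _ | ⟨n, x⟩ <;> rfl
  · intro X Y f m d; rcases d with _ | ⟨n, x⟩ <;> rfl
  · intro X d; rcases d with _ | ⟨n, x⟩ <;> rfl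
  · intro X m x; rfl
  · intro X m n d; rcases d with _ | ⟨k, x⟩ <;> rfl
  · intro X m dd; rcases dd with _ | ⟨n, _ | ⟨k, x⟩⟩ <;> rfl
end

section
/- The global state monad (S × -)^S = S → S × (-) on Set is a monad, with unit x ↦ λs.(s,x) and multiplication flattening by threading the state; equivalently, it is presented by operations lookup : X^S → X and update : X → X^S satisfying the four Plotkin–Power equations. -/
/-- The global state monad `(S × -)^S`. -/
def St (S X : Type) : Type := S → S × X

namespace St

/-- Unit `x ↦ λ s. (s, x)`. -/
def pure {S X : Type} (x : X) : St S X := fun s => (s, x)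

/-- Functorial action. -/
def map {S X Y : Type} (f : X → Y) (a : St S X) : St S Y :=
  fun s => ((a s).1, f (a s).2)

/-- Multiplication, flattening by threading the state. -/
def mu {S X : Type} (F : St S (St S X)) : St S X := fun s => (F s).2 (F s).1

/-- The lookup operation on the state monad. -/
def lookup {S X : Type} (f : S → St S X) : St S X := fun s => f s s

/-- The update operation on the state monad. -/
def update {S X : Type} (a : St S X) (s : S) : St S X := fun _ => a s

end St

/-- A GS-algebra: a model of the Plotkin–Power algebraic theory of global state, with
operations `lookup : X^S → X` and `update : X → X^S` satisfying the four equations. -/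
structure GSAlg (S : Type) where
  carrier : Type
  lookup : (S → carrier) → carrier
  update : carrier → S → carrier
  eq1 : ∀ f : S → S → carrier,
    lookup (fun s => lookup (f s)) = lookup (fun s => f s s)
  eq2 : ∀ x : carrier, lookup (update x) = x
  eq3 : ∀ (g : S → carrier) (s : S), update (lookup g) s = update (g s) s
  eq4 : ∀ (x : carrier) (s t : S), update (update x s) t = update x s

/-- Homomorphisms of GS-algebras. -/
def GSHom {S : Type} (A B : GSAlg S) (h : A.carrier → B.carrier) : Prop :=
  (∀ f : S → A.carrier, h (A.lookup f) = B.lookup (fun s => h (f s))) ∧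
  (∀ (x : A.carrier) (s : S), h (A.update x s) = B.update (h x) s)

/-- The state monad `St S X` as a GS-algebra. -/
def StAlg (S X : Type) : GSAlg S where
  carrier := St S X
  lookup := St.lookup
  update := St.update
  eq1 := fun _ => rfl
  eq2 := fun _ => rfl
  eq3 := fun _ _ => rfl
  eq4 := fun _ _ _ => rfl

/-- The global state monad `(S × -)^S` is a monad, with unit `x ↦ λs.(s,x)` and
multiplication threading the state; equivalently it is presented by the Plotkin–Power
theory of `lookup` and `update`: `St S X` is the free GS-algebra on `X`. -/
theorem state_monad_and_presentation (S : Type) :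
    -- monad laws
    (∀ (X : Type) (a : St S X), St.mu (St.pure a) = a) ∧
    (∀ (X : Type) (a : St S X), St.mu (St.map St.pure a) = a) ∧
    (∀ (X : Type) (F : St S (St S (St S X))),
        St.mu (St.mu F) = St.mu (St.map St.mu F)) ∧
    -- freeness: St S X is the free GS-algebra on X
    (∀ (X : Type) (B : GSAlg S) (f : X → B.carrier),
        ∃! h : St S X → B.carrier,
          GSHom (StAlg S X) B h ∧ ∀ x : X, h (St.pure x) = f x) := by

  refine ⟨fun X a => rfl, fun X a => rfl, fun X F => rfl, fun X B f => ?_⟩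
  refine ⟨fun a => B.lookup (fun s => B.update (f (a s).2) (a s).1), ⟨⟨?_, ?_⟩, ?_⟩, ?_⟩
  · intro g
    exact (B.eq1 (fun s t => B.update (f (g s t).2) (g s t).1)).symm
  · intro a s
    show B.lookup (fun _ : S => B.update (f (a s).2) (a s).1)
        = B.update (B.lookup (fun t => B.update (f (a t).2) (a t).1)) s
    have h1 : (fun t : S => B.update (f (a s).2) (a s).1)
        = B.update (B.update (f (a s).2) (a s).1) := by
      funext t; exact (B.eq4 _ _ _).symm
    rw [h1, B.eq2]
    rw [B.eq3 (fun t => B.update (f (a t).2) (a t).1) s, B.eq4]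
  · intro x
    have : (fun s : S => B.update (f x) s) = B.update (f x) := rfl
    show B.lookup (B.update (f x)) = f x
    exact B.eq2 _
  · rintro h ⟨⟨hl, hu⟩, hp⟩
    have hl' : ∀ g : S → St S X, h (St.lookup g) = B.lookup (fun s => h (g s)) := hl
    have hu' : ∀ (x : St S X) (s : S), h (St.update x s) = B.update (h x) s := hu
    funext a
    have ha : a = St.lookup (fun s => St.update (St.pure (a s).2) (a s).1) := by
      funext s; rfl
    conv_lhs => rw [ha]
    rw [hl']
    congr 1; funext s
    rw [hu', hp]
end

section
/- There is no distributive law of the finite powerset monad over the coinductive delay monad: no natural transformation ζ : P_f ∘ D → D ∘ P_f satisfies the four axioms of a distributive law. -/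
attribute [local instance] Classical.propDecidable

/-!
By naturality, `ζ` is determined on every set `{now a, step (now b)}` by its value `p` on
`{now false, step (now true)} : Finset (Delay Bool)`. The multiplication law for `μ^D` applied to
`{now (step (now x)), step (now (now x))}`, which `μ^D` flattens to `{step (now x)}`, forces `p` to
terminate, `p = step^k (now u)`, with `u ≠ ∅`; and `u = {false, true}` would need `k + k = 1`. If
`u` is a singleton, the same law makes `ζ` send the swap-invariant set
`{step (now false), step (now true)}` to a computation with a singleton result, contradicting
naturality along `not`.
-/

theorem Finset.bool_eq_empty_or_singleton_or_univ (u : Finset Bool) :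
    u = ∅ ∨ (∃ c, u = {c}) ∨ u = Finset.univ := by
  by_cases hf : false ∈ u <;> by_cases ht : true ∈ u
  · refine .inr (.inr ?_); ext b; cases b <;> simp [hf, ht]
  · refine .inr (.inl ⟨false, ?_⟩); ext b; cases b <;> simp [hf, ht]
  · refine .inr (.inl ⟨true, ?_⟩); ext b; cases b <;> simp [hf, ht]
  · refine .inl ?_; ext b; cases b <;> simp [hf, ht]

namespace Delay

variable {X Y : Type}

/-- `step^[n] (now x)`. -/
def after (n : ℕ) (x : X) : Delay X := some (n, x)

theorem eq_diverge_or_eq_after (d : Delay X) : d = diverge ∨ ∃ n x, d = after n x := by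
  rcases d with _ | ⟨n, x⟩
  exacts [.inl rfl, .inr ⟨n, x, rfl⟩]

@[simp] theorem now_eq_after (x : X) : now x = after 0 x := rfl

@[simp] theorem step_after (n : ℕ) (x : X) : step (after n x) = after (n + 1) x := rfl

@[simp] theorem after_inj {m n : ℕ} {x y : X} : after m x = after n y ↔ m = n ∧ x = y :=
  Option.some_inj.trans Prod.mk_inj

@[simp] theorem diverge_ne_after (n : ℕ) (x : X) : diverge ≠ after n x := nofun

@[simp] theorem map_diverge (f : X → Y) : map f diverge = diverge := rfl

@[simp] theorem map_after (f : X → Y) (n : ℕ) (x : X) : map f (after n x) = after n (f x) := rfl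

@[simp] theorem mu_diverge : mu (diverge : Delay (Delay X)) = diverge := rfl

@[simp] theorem mu_after_diverge (n : ℕ) : mu (after n (diverge : Delay X)) = diverge := rfl

@[simp] theorem mu_after_after (m n : ℕ) (x : X) : mu (after m (after n x)) = after (m + n) x :=
  rfl

theorem map_now (f : X → Y) (x : X) : map f (now x) = now (f x) := rfl

theorem map_step (f : X → Y) (d : Delay X) : map f (step d) = step (map f d) := by
  rcases d with _ | ⟨n, x⟩ <;> rfl

theorem mu_now (d : Delay X) : mu (now d) = d := by
  rcases d.eq_diverge_or_eq_after with rfl | ⟨n, x, rfl⟩ <;> simp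

theorem mu_step_now (d : Delay X) : mu (step (now d)) = step d := by
  rcases d.eq_diverge_or_eq_after with rfl | ⟨n, x, rfl⟩
  · rfl
  · simp [Nat.add_comm]

end Delay

namespace FinsetDelay

open Delay

variable (ζ : ∀ X : Type, Finset (Delay X) → Delay (Finset X))

def IsNatural : Prop :=
  ∀ (X Y : Type) (f : X → Y) (s : Finset (Delay X)),
    ζ Y (s.image (Delay.map f)) = Delay.map (fun u => u.image f) (ζ X s)

def MapsSingleton : Prop :=
  ∀ (X : Type) (d : Delay X), ζ X {d} = Delay.map (fun x => ({x} : Finset X)) d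

def CommutesWithMu : Prop :=
  ∀ (X : Type) (s : Finset (Delay (Delay X))),
    ζ X (s.image Delay.mu) = Delay.mu (Delay.map (ζ X) (ζ (Delay X) s))

noncomputable def probe : Delay (Finset Bool) := ζ Bool {now false, step (now true)}

variable {ζ}

theorem apply_pair (hnat : IsNatural ζ) {X : Type} (a b : X) :
    ζ X {now a, step (now b)} = Delay.map (fun u => u.image (cond · b a)) (probe ζ) := by
  simpa only [Finset.image_insert, Finset.image_singleton, map_now, map_step, cond_false,
    cond_true, probe] using hnat Bool X (cond · b a) {now false, step (now true)}

theorem map_image_apply_of_image_map_eq (hnat : IsNatural ζ) {X : Type} (f : X → X)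
    {s : Finset (Delay X)} (hs : s.image (Delay.map f) = s) :
    Delay.map (fun u => u.image f) (ζ X s) = ζ X s := by
  rw [← hnat, hs]

theorem apply_step_pair (hmu : CommutesWithMu ζ) {X : Type} (a b : X) :
    ζ X {step (now a), step (now b)}
      = mu (Delay.map (ζ X) (ζ (Delay X) {now (step (now a)), step (now (now b))})) := by
  simpa only [Finset.image_insert, Finset.image_singleton, mu_now, mu_step_now]
    using hmu X {now (step (now a)), step (now (now b))}

theorem mu_map_probe (hnat : IsNatural ζ) (hsing : MapsSingleton ζ)
    (hmu : CommutesWithMu ζ) {X : Type} (x : X) :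
    mu (Delay.map (ζ X) (Delay.map (fun u => u.image (cond · (now x) (step (now x)))) (probe ζ)))
      = step (now {x}) := by
  have h := apply_step_pair hmu x x
  rw [Finset.pair_eq_singleton, hsing, apply_pair hnat] at h
  exact h.symm

theorem probe_ne_diverge (hnat : IsNatural ζ) (hsing : MapsSingleton ζ)
    (hmu : CommutesWithMu ζ) : probe ζ ≠ diverge := by
  intro h
  simpa [h] using mu_map_probe hnat hsing hmu false

theorem probe_ne_empty (hnat : IsNatural ζ) (hsing : MapsSingleton ζ)
    (hmu : CommutesWithMu ζ) (k : ℕ) : probe ζ ≠ after k ∅ := by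
  intro h
  have hfalse := mu_map_probe hnat hsing hmu false
  have htrue := mu_map_probe hnat hsing hmu true
  simp only [h, map_after, Finset.image_empty] at hfalse htrue
  rw [hfalse] at htrue
  simp at htrue

theorem probe_ne_univ (hnat : IsNatural ζ) (hsing : MapsSingleton ζ)
    (hmu : CommutesWithMu ζ) (k : ℕ) : probe ζ ≠ after k Finset.univ := by
  intro h
  have hconst := apply_pair hnat false false
  simp only [h, Fintype.univ_bool, map_after, Finset.image_insert, Finset.image_singleton,
    cond_true, cond_false, Finset.pair_eq_singleton] at hconst
  have h1 := mu_map_probe hnat hsing hmu false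
  simp only [h, Fintype.univ_bool, map_after, Finset.image_insert, Finset.image_singleton,
    cond_true, cond_false, hconst] at h1
  simp at h1
  omega

theorem probe_ne_singleton (hnat : IsNatural ζ) (hsing : MapsSingleton ζ)
    (hmu : CommutesWithMu ζ) (k : ℕ) (c : Bool) : probe ζ ≠ after k {c} := by
  intro h
  have hswap := map_image_apply_of_image_map_eq hnat (!·)
    (s := {step (now true), step (now false)}) (by simp [Finset.pair_comm])
  rw [apply_step_pair hmu, apply_pair hnat, h] at hswap
  cases c <;> simp [hsing Bool] at hswap

end FinsetDelay

/-- There is no distributive law of the finite powerset monad (the free semilattice monad,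
with unit `x ↦ {x}`, functorial action `image`, and multiplication `biUnion id`) over the
coinductive delay monad: no natural transformation `ζ : P_f ∘ D → D ∘ P_f` satisfies the
two unit axioms and the two multiplication axioms of a distributive law. -/
theorem no_distributive_law_finset_over_delay :
    ¬ ∃ ζ : ∀ X : Type, Finset (Delay X) → Delay (Finset X),
      -- naturality
      (∀ (X Y : Type) (f : X → Y) (s : Finset (Delay X)),
          ζ Y (s.image (Delay.map f)) = Delay.map (fun u => u.image f) (ζ X s)) ∧
      -- ζ ∘ η^{P_f} D = D η^{P_f}
      (∀ (X : Type) (d : Delay X),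
          ζ X {d} = Delay.map (fun x => ({x} : Finset X)) d) ∧
      -- ζ ∘ P_f η^D = η^D P_f
      (∀ (X : Type) (s : Finset X), ζ X (s.image Delay.now) = Delay.now s) ∧
      -- ζ ∘ μ^{P_f} D = D μ^{P_f} ∘ ζ P_f ∘ P_f ζ
      (∀ (X : Type) (s : Finset (Finset (Delay X))),
          ζ X (s.biUnion id)
            = Delay.map (fun u : Finset (Finset X) => u.biUnion id)
                (ζ (Finset X) (s.image (ζ X)))) ∧
      -- ζ ∘ P_f μ^D = μ^D P_f ∘ D ζ ∘ ζ D
      (∀ (X : Type) (s : Finset (Delay (Delay X))),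
          ζ X (s.image Delay.mu)
            = Delay.mu (Delay.map (ζ X) (ζ (Delay X) s))) := by
  rintro ⟨ζ, hnat, hsing, -, -, hmu⟩
  rcases (FinsetDelay.probe ζ).eq_diverge_or_eq_after with h | ⟨k, u, h⟩
  · exact FinsetDelay.probe_ne_diverge hnat hsing hmu h
  rcases Finset.bool_eq_empty_or_singleton_or_univ u with rfl | ⟨c, rfl⟩ | rfl
  · exact FinsetDelay.probe_ne_empty hnat hsing hmu k h
  · exact FinsetDelay.probe_ne_singleton hnat hsing hmu k c h
  · exact FinsetDelay.probe_ne_univ hnat hsing hmu k h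
end

section
/- Let T be the free monad of the algebraic theory with one idempotent binary operation ∗ and one unary operation !, with no further equations. Then the equations !(step x) = x, (step x) ∗ y = step(x ∗ (!y)), x ∗ (step y) = step((!x) ∗ y) (together with the pointwise lifting on now-values) define a distributive law T∘D → D∘T over the coinductive delay monad D. -/
/-- Terms of the algebraic theory with one binary operation `∗` and one unary
operation `!`. -/
inductive FreeTerm (X : Type) : Type
  | var : X → FreeTerm X
  | op : FreeTerm X → FreeTerm X → FreeTerm X
  | bang : FreeTerm X → FreeTerm X

/-- The congruence generated by idempotence `t ∗ t = t` (and no further equations). -/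
inductive FreeRel (X : Type) : FreeTerm X → FreeTerm X → Prop
  | of_idem (t) : FreeRel X (.op t t) t
  | refl (t) : FreeRel X t t
  | symm {s t} : FreeRel X s t → FreeRel X t s
  | trans {s t u} : FreeRel X s t → FreeRel X t u → FreeRel X s u
  | op_congr {s s' t t'} : FreeRel X s s' → FreeRel X t t' →
      FreeRel X (.op s t) (.op s' t')
  | bang_congr {s t} : FreeRel X s t → FreeRel X (.bang s) (.bang t)

/-- The free monad `T` of the theory with an idempotent binary operation `∗` and a unary
operation `!`. -/
def FreeT (X : Type) : Type := Quot (FreeRel X)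

def FreeTerm.rename {X Y : Type} (f : X → Y) : FreeTerm X → FreeTerm Y
  | .var x => .var (f x)
  | .op s t => .op (rename f s) (rename f t)
  | .bang s => .bang (rename f s)

theorem FreeTerm.rename_rel {X Y : Type} (f : X → Y) {s t : FreeTerm X}
    (h : FreeRel X s t) : FreeRel Y (s.rename f) (t.rename f) := by
  induction h with
  | of_idem t => exact .of_idem _
  | refl t => exact .refl _
  | symm _ ih => exact .symm ih
  | trans _ _ ih1 ih2 => exact .trans ih1 ih2
  | op_congr _ _ ih1 ih2 => exact .op_congr ih1 ih2
  | bang_congr _ ih => exact .bang_congr ih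

namespace FreeT

/-- Unit of `T`. -/
def var {X : Type} (x : X) : FreeT X := Quot.mk _ (.var x)

/-- The binary operation `∗` of `T`. -/
def op {X : Type} : FreeT X → FreeT X → FreeT X :=
  Quot.map₂ FreeTerm.op (fun a _ _ h => FreeRel.op_congr (FreeRel.refl a) h)
    (fun _ _ b h => FreeRel.op_congr h (FreeRel.refl b))

/-- The unary operation `!` of `T`. -/
def bang {X : Type} : FreeT X → FreeT X :=
  Quot.map FreeTerm.bang fun _ _ h => FreeRel.bang_congr h

/-- Functorial action of `T`. -/
def map {X Y : Type} (f : X → Y) : FreeT X → FreeT Y :=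
  Quot.map (FreeTerm.rename f) fun _ _ h => FreeTerm.rename_rel f h

theorem op_idem {X : Type} (q : FreeT X) : op q q = q := by
  induction q using Quot.ind with
  | _ a => exact Quot.sound (FreeRel.of_idem a)

def joinAux {X : Type} : FreeTerm (FreeT X) → FreeT X
  | .var q => q
  | .op s t => op (joinAux s) (joinAux t)
  | .bang s => bang (joinAux s)

theorem joinAux_rel {X : Type} {s t : FreeTerm (FreeT X)}
    (h : FreeRel (FreeT X) s t) : joinAux s = joinAux t := by
  induction h with
  | of_idem t => exact op_idem _
  | refl t => rfl
  | symm _ ih => exact ih.symm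
  | trans _ _ ih1 ih2 => exact ih1.trans ih2
  | op_congr _ _ ih1 ih2 => show op _ _ = op _ _; rw [ih1, ih2]
  | bang_congr _ ih => show bang _ = bang _; rw [ih]

/-- Multiplication of `T`. -/
def mu {X : Type} : FreeT (FreeT X) → FreeT X :=
  Quot.lift joinAux fun _ _ h => joinAux_rel h

end FreeT

/-!
If `A` is an algebra for the theory, so is `D A`: `!` consumes one `step` (and acts on a value),
and `d ∗ e` waits for both computations, the `step`s by which one side is faster becoming `!`s
applied to its value. This lifting satisfies the step equations, and iterating them gives
`stepⁿ d ∗ stepᵐ e = step^(max n m) (!^(m-n) d ∗ !^(n-m) e)`.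
The distributive law `ζ` is the unique homomorphism `T (D X) → D (T X)` extending `D η^T`, and
each axiom equates two homomorphisms out of a free algebra that agree on generators. The only
nontrivial homomorphism involved is `μ^D ∘ D ζ`, and that is exactly the iterated step equation.
-/

class IdemBangAlgebra (A : Type) where
  op : A → A → A
  bang : A → A
  op_self : ∀ a, op a a = a

namespace IdemBangAlgebra

structure IsHom {A B : Type} [IdemBangAlgebra A] [IdemBangAlgebra B] (f : A → B) : Prop where
  map_op : ∀ a b, f (op a b) = op (f a) (f b)
  map_bang : ∀ a, f (bang a) = bang (f a)

variable {A B C : Type} [IdemBangAlgebra A] [IdemBangAlgebra B] [IdemBangAlgebra C]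

theorem IsHom.comp {g : B → C} {f : A → B} (hg : IsHom g) (hf : IsHom f) : IsHom (g ∘ f) where
  map_op a b := by simp only [Function.comp_apply, hf.map_op, hg.map_op]
  map_bang a := by simp only [Function.comp_apply, hf.map_bang, hg.map_bang]

theorem IsHom.map_bang_iterate {f : A → B} (hf : IsHom f) (k : ℕ) (a : A) :
    f (bang^[k] a) = bang^[k] (f a) :=
  Function.Semiconj.iterate_right hf.map_bang k a

end IdemBangAlgebra

open IdemBangAlgebra

instance (X : Type) : IdemBangAlgebra (FreeT X) := ⟨FreeT.op, FreeT.bang, FreeT.op_idem⟩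

def FreeTerm.eval {X A : Type} [IdemBangAlgebra A] (g : X → A) : FreeTerm X → A
  | .var x => g x
  | .op s t => IdemBangAlgebra.op (s.eval g) (t.eval g)
  | .bang s => IdemBangAlgebra.bang (s.eval g)

theorem FreeTerm.eval_eq_of_rel {X A : Type} [IdemBangAlgebra A] (g : X → A)
    {s t : FreeTerm X} (h : FreeRel X s t) : s.eval g = t.eval g := by
  induction h with
  | of_idem t => exact op_self _
  | refl t => rfl
  | symm _ ih => exact ih.symm
  | trans _ _ ih₁ ih₂ => exact ih₁.trans ih₂
  | op_congr _ _ ih₁ ih₂ => exact congrArg₂ IdemBangAlgebra.op ih₁ ih₂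
  | bang_congr _ ih => exact congrArg IdemBangAlgebra.bang ih

namespace FreeT

variable {X Y A : Type} [IdemBangAlgebra A]

def lift (g : X → A) : FreeT X → A :=
  Quot.lift (FreeTerm.eval g) fun _ _ => FreeTerm.eval_eq_of_rel g

theorem lift_var (g : X → A) (x : X) : lift g (var x) = g x := rfl

theorem isHom_lift (g : X → A) : IsHom (lift g) where
  map_op a b := by
    induction a using Quot.ind
    induction b using Quot.ind
    rfl
  map_bang a := by
    induction a using Quot.ind
    rfl

theorem hom_ext {f g : FreeT X → A} (hf : IsHom f) (hg : IsHom g)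
    (h : ∀ x, f (var x) = g (var x)) : f = g := by
  funext t
  induction t using Quot.ind with
  | _ u =>
    induction u with
    | var x => exact h x
    | op s t ihs iht =>
      exact (hf.map_op _ _).trans ((congrArg₂ _ ihs iht).trans (hg.map_op _ _).symm)
    | bang s ihs =>
      exact (hf.map_bang _).trans ((congrArg _ ihs).trans (hg.map_bang _).symm)

theorem isHom_map (f : X → Y) : IsHom (map f) where
  map_op a b := by
    induction a using Quot.ind
    induction b using Quot.ind
    rfl
  map_bang a := by
    induction a using Quot.ind
    rfl

theorem isHom_mu : IsHom (mu : FreeT (FreeT X) → FreeT X) where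
  map_op a b := by
    induction a using Quot.ind
    induction b using Quot.ind
    rfl
  map_bang a := by
    induction a using Quot.ind
    rfl

end FreeT

namespace Delay

section Basic

variable {X Y Z : Type}

theorem map_map (f : X → Y) (g : Y → Z) (d : Delay X) : map g (map f d) = map (g ∘ f) d := by
  cases d <;> rfl

theorem map_id (d : Delay X) : map id d = d := by
  cases d <;> rfl

theorem step_iterate_diverge (n : ℕ) : step^[n] (diverge : Delay X) = diverge :=
  Function.iterate_fixed rfl n

theorem step_iterate_some (n m : ℕ) (x : X) :
    step^[n] (some (m, x) : Delay X) = some (m + n, x) := by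
  induction n with
  | zero => rfl
  | succ n ih => exact (Function.iterate_succ_apply' step n _).trans (congrArg step ih)

theorem mu_some (n : ℕ) (d : Delay X) : mu (some (n, d)) = step^[n] d := by
  cases d with
  | none => exact (step_iterate_diverge n).symm
  | some p => rw [step_iterate_some, Nat.add_comm]; rfl

theorem map_mu (f : X → Y) (d : Delay (Delay X)) : map f (mu d) = mu (map (map f) d) := by
  rcases d with _ | ⟨n, _ | ⟨m, x⟩⟩ <;> rfl

end Basic

variable {A B : Type} [IdemBangAlgebra A] [IdemBangAlgebra B]

def liftBang : Delay A → Delay A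
  | none => none
  | some (0, a) => some (0, bang a)
  | some (n + 1, a) => some (n, a)

def liftOp : Delay A → Delay A → Delay A
  | some (n, a), some (m, b) => some (max n m, op (bang^[m - n] a) (bang^[n - m] b))
  | _, _ => none

theorem liftOp_self (d : Delay A) : liftOp d d = d := by
  rcases d with _ | ⟨n, a⟩
  · rfl
  · show some (max n n, op (bang^[n - n] a) (bang^[n - n] a)) = some (n, a)
    rw [max_self, Nat.sub_self, Function.iterate_zero_apply, op_self]

instance : IdemBangAlgebra (Delay A) := ⟨liftOp, liftBang, liftOp_self⟩

theorem bang_now (a : A) : bang (now a) = now (bang a) := rfl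

theorem bang_step (d : Delay A) : bang (step d) = d := by
  cases d <;> rfl

theorem op_now_now (a b : A) : op (now a) (now b) = now (op a b) := rfl

theorem op_diverge (d : Delay A) : op d diverge = diverge := by
  cases d <;> rfl

theorem op_step_left (d e : Delay A) : op (step d) e = step (op d (bang e)) := by
  rcases d with _ | ⟨n, a⟩
  · rfl
  rcases e with _ | ⟨_ | m, b⟩
  · rfl
  · show some (max (n + 1) 0, op (bang^[0 - (n + 1)] a) (bang^[n + 1 - 0] b))
      = some (max n 0 + 1, op (bang^[0 - n] a) (bang^[n - 0] (bang b)))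
    simp only [Nat.zero_sub, Nat.sub_zero, Nat.max_zero, Function.iterate_succ_apply]
  · show some (max (n + 1) (m + 1), op (bang^[m + 1 - (n + 1)] a) (bang^[n + 1 - (m + 1)] b))
      = some (max n m + 1, op (bang^[m - n] a) (bang^[n - m] b))
    simp only [Nat.add_sub_add_right, Nat.add_max_add_right]

theorem op_step_right (d e : Delay A) : op d (step e) = step (op (bang d) e) := by
  rcases e with _ | ⟨m, b⟩
  · exact (op_diverge d).trans (congrArg step (op_diverge (bang d))).symm
  rcases d with _ | ⟨_ | n, a⟩
  · rfl
  · show some (max 0 (m + 1), op (bang^[m + 1 - 0] a) (bang^[0 - (m + 1)] b))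
      = some (max 0 m + 1, op (bang^[m - 0] (bang a)) (bang^[0 - m] b))
    simp only [Nat.zero_sub, Nat.sub_zero, Nat.zero_max, Function.iterate_succ_apply]
  · show some (max (n + 1) (m + 1), op (bang^[m + 1 - (n + 1)] a) (bang^[n + 1 - (m + 1)] b))
      = some (max n m + 1, op (bang^[m - n] a) (bang^[n - m] b))
    simp only [Nat.add_sub_add_right, Nat.add_max_add_right]

theorem bang_iterate_step_iterate (k : ℕ) (d : Delay A) : bang^[k] (step^[k] d) = d := by
  induction k with
  | zero => rfl
  | succ k ih => rw [Function.iterate_succ_apply, Function.iterate_succ_apply', bang_step, ih]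

theorem op_step_iterate_left (k : ℕ) (d e : Delay A) :
    op (step^[k] d) e = step^[k] (op d (bang^[k] e)) := by
  induction k generalizing e with
  | zero => rfl
  | succ k ih =>
    rw [Function.iterate_succ_apply', op_step_left, ih, Function.iterate_succ_apply',
      ← Function.iterate_succ_apply]

theorem op_step_iterate_right (k : ℕ) (d e : Delay A) :
    op d (step^[k] e) = step^[k] (op (bang^[k] d) e) := by
  induction k generalizing d with
  | zero => rfl
  | succ k ih =>
    rw [Function.iterate_succ_apply', op_step_right, ih, Function.iterate_succ_apply',
      ← Function.iterate_succ_apply]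

theorem op_step_iterate_step_iterate (k : ℕ) (d e : Delay A) :
    op (step^[k] d) (step^[k] e) = step^[k] (op d e) := by
  rw [op_step_iterate_left, bang_iterate_step_iterate]

theorem op_step_iterate (n m : ℕ) (d e : Delay A) :
    op (step^[n] d) (step^[m] e) = step^[max n m] (op (bang^[m - n] d) (bang^[n - m] e)) := by
  rcases le_total n m with h | h
  · obtain ⟨k, rfl⟩ := Nat.exists_eq_add_of_le h
    rw [Function.iterate_add_apply, op_step_iterate_step_iterate, op_step_iterate_right,
      ← Function.iterate_add_apply, max_eq_right h, Nat.add_sub_cancel_left,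
      Nat.sub_eq_zero_of_le h]
    rfl
  · obtain ⟨k, rfl⟩ := Nat.exists_eq_add_of_le h
    rw [Function.iterate_add_apply, op_step_iterate_step_iterate, op_step_iterate_left,
      ← Function.iterate_add_apply, max_eq_left h, Nat.add_sub_cancel_left,
      Nat.sub_eq_zero_of_le h]
    rfl

theorem isHom_now : IsHom (now : A → Delay A) where
  map_op _ _ := rfl
  map_bang _ := rfl

theorem isHom_map {f : A → B} (hf : IsHom f) : IsHom (map f) where
  map_op d e := by
    rcases d with _ | ⟨n, a⟩
    · rfl
    rcases e with _ | ⟨m, b⟩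
    · rfl
    show some (max n m, f (op (bang^[m - n] a) (bang^[n - m] b)))
      = some (max n m, op (bang^[m - n] (f a)) (bang^[n - m] (f b)))
    rw [hf.map_op, hf.map_bang_iterate, hf.map_bang_iterate]
  map_bang d := by
    rcases d with _ | ⟨_ | n, a⟩
    · rfl
    · exact congrArg (fun b => some (0, b)) (hf.map_bang a)
    · rfl

theorem isHom_mu_comp_map {g : B → Delay A} (hg : IsHom g) : IsHom (fun d => mu (map g d)) where
  map_op d e := by
    rcases d with _ | ⟨n, a⟩
    · rfl
    rcases e with _ | ⟨m, b⟩
    · exact (op_diverge _).symm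
    show mu (some (max n m, g (op (bang^[m - n] a) (bang^[n - m] b))))
      = op (mu (some (n, g a))) (mu (some (m, g b)))
    rw [mu_some, mu_some, mu_some, op_step_iterate, hg.map_op, hg.map_bang_iterate,
      hg.map_bang_iterate]
  map_bang d := by
    rcases d with _ | ⟨_ | n, a⟩
    · rfl
    · show mu (some (0, g (bang a))) = bang (mu (some (0, g a)))
      rw [mu_some, mu_some]
      exact hg.map_bang a
    · show mu (some (n, g a)) = bang (mu (some (n + 1, g a)))
      rw [mu_some, mu_some, Function.iterate_succ_apply', bang_step]

end Delay

def delayDistrib (X : Type) : FreeT (Delay X) → Delay (FreeT X) :=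
  FreeT.lift (Delay.map FreeT.var)

section delayDistrib

variable {X Y : Type}

theorem isHom_delayDistrib : IsHom (delayDistrib X) := FreeT.isHom_lift _

theorem delayDistrib_var (d : Delay X) : delayDistrib X (FreeT.var d) = Delay.map FreeT.var d :=
  FreeT.lift_var _ d

theorem delayDistrib_natural (f : X → Y) (t : FreeT (Delay X)) :
    delayDistrib Y (FreeT.map (Delay.map f) t) = Delay.map (FreeT.map f) (delayDistrib X t) :=
  congrFun (FreeT.hom_ext (isHom_delayDistrib.comp (FreeT.isHom_map _))
    ((Delay.isHom_map (FreeT.isHom_map f)).comp isHom_delayDistrib)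
    fun d => by
      show Delay.map FreeT.var (Delay.map f d) = Delay.map (FreeT.map f) (Delay.map FreeT.var d)
      rw [Delay.map_map, Delay.map_map]
      rfl) t

theorem delayDistrib_map_now (t : FreeT X) :
    delayDistrib X (FreeT.map Delay.now t) = Delay.now t :=
  congrFun (FreeT.hom_ext (isHom_delayDistrib.comp (FreeT.isHom_map _)) Delay.isHom_now
    fun _ => rfl) t

theorem delayDistrib_mu (t : FreeT (FreeT (Delay X))) :
    delayDistrib X (FreeT.mu t)
      = Delay.map FreeT.mu (delayDistrib (FreeT X) (FreeT.map (delayDistrib X) t)) :=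
  congrFun (FreeT.hom_ext (isHom_delayDistrib.comp FreeT.isHom_mu)
    (((Delay.isHom_map FreeT.isHom_mu).comp isHom_delayDistrib).comp (FreeT.isHom_map _))
    fun q => by
      show delayDistrib X q = Delay.map FreeT.mu (Delay.map FreeT.var (delayDistrib X q))
      rw [Delay.map_map]
      exact (Delay.map_id _).symm) t

theorem delayDistrib_map_mu (t : FreeT (Delay (Delay X))) :
    delayDistrib X (FreeT.map Delay.mu t)
      = Delay.mu (Delay.map (delayDistrib X) (delayDistrib (Delay X) t)) :=
  congrFun (FreeT.hom_ext (isHom_delayDistrib.comp (FreeT.isHom_map _))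
    ((Delay.isHom_mu_comp_map isHom_delayDistrib).comp isHom_delayDistrib)
    fun d => by
      show Delay.map FreeT.var (Delay.mu d)
        = Delay.mu (Delay.map (delayDistrib X) (Delay.map FreeT.var d))
      rw [Delay.map_map, Delay.map_mu]
      rfl) t

theorem map_mu_delayDistrib_var (d : Delay (FreeT X)) :
    Delay.map FreeT.mu (delayDistrib (FreeT X) (FreeT.var d)) = d :=
  (Delay.map_map _ _ d).trans (Delay.map_id d)

theorem map_mu_delayDistrib_op_var (d e : Delay (FreeT X)) :
    Delay.map FreeT.mu (delayDistrib (FreeT X) (FreeT.op (FreeT.var d) (FreeT.var e)))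
      = op d e := by
  have h := congrArg (Delay.map FreeT.mu) (isHom_delayDistrib.map_op (FreeT.var d) (FreeT.var e))
  rwa [(Delay.isHom_map FreeT.isHom_mu).map_op, map_mu_delayDistrib_var,
    map_mu_delayDistrib_var] at h

theorem map_mu_delayDistrib_bang_var (d : Delay (FreeT X)) :
    Delay.map FreeT.mu (delayDistrib (FreeT X) (FreeT.bang (FreeT.var d))) = bang d := by
  have h := congrArg (Delay.map FreeT.mu) (isHom_delayDistrib.map_bang (FreeT.var d))
  rwa [(Delay.isHom_map FreeT.isHom_mu).map_bang, map_mu_delayDistrib_var] at h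

end delayDistrib

/-- Let `T` be the free monad of the theory with one idempotent binary operation `∗` and
one unary operation `!` (no further equations). Then the equations `!(step x) = x`,
`(step x) ∗ y = step (x ∗ !y)`, `x ∗ (step y) = step ((!x) ∗ y)`, together with the
pointwise lifting on `now`-values, define a distributive law `T ∘ D → D ∘ T` over the
coinductive delay monad: there is a natural transformation `ζ : T(DX) → D(TX)` satisfying
the four distributive-law axioms whose induced lifting of the `T`-algebra structure to
`D(TX)` satisfies the above equations. -/
theorem idempotent_bang_distributive_law :
    ∃ ζ : ∀ X : Type, FreeT (Delay X) → Delay (FreeT X),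
      -- naturality
      (∀ (X Y : Type) (f : X → Y) (t : FreeT (Delay X)),
          ζ Y (FreeT.map (Delay.map f) t) = Delay.map (FreeT.map f) (ζ X t)) ∧
      -- ζ ∘ η^T D = D η^T
      (∀ (X : Type) (d : Delay X), ζ X (FreeT.var d) = Delay.map FreeT.var d) ∧
      -- ζ ∘ T η^D = η^D T
      (∀ (X : Type) (t : FreeT X), ζ X (FreeT.map Delay.now t) = Delay.now t) ∧
      -- ζ ∘ μ^T D = D μ^T ∘ ζ T ∘ T ζ
      (∀ (X : Type) (t : FreeT (FreeT (Delay X))),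
          ζ X (FreeT.mu t)
            = Delay.map FreeT.mu (ζ (FreeT X) (FreeT.map (ζ X) t))) ∧
      -- ζ ∘ T μ^D = μ^D T ∘ D ζ ∘ ζ D
      (∀ (X : Type) (t : FreeT (Delay (Delay X))),
          ζ X (FreeT.map Delay.mu t)
            = Delay.mu (Delay.map (ζ X) (ζ (Delay X) t))) ∧
      -- the induced lifting of the T-algebra structure to D(T X) satisfies the
      -- defining equations of the lifting
      (∀ X : Type,
        let opD : Delay (FreeT X) → Delay (FreeT X) → Delay (FreeT X) := fun d e =>
          Delay.map FreeT.mu (ζ (FreeT X) (FreeT.op (FreeT.var d) (FreeT.var e)))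
        let bangD : Delay (FreeT X) → Delay (FreeT X) := fun d =>
          Delay.map FreeT.mu (ζ (FreeT X) (FreeT.bang (FreeT.var d)))
        (∀ t : FreeT X, bangD (Delay.now t) = Delay.now (FreeT.bang t)) ∧
        (∀ d : Delay (FreeT X), bangD (Delay.step d) = d) ∧
        (∀ s t : FreeT X,
            opD (Delay.now s) (Delay.now t) = Delay.now (FreeT.op s t)) ∧
        (∀ d e : Delay (FreeT X),
            opD (Delay.step d) e = Delay.step (opD d (bangD e))) ∧
        (∀ d e : Delay (FreeT X),
            opD d (Delay.step e) = Delay.step (opD (bangD d) e))) := by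
  refine ⟨delayDistrib, fun _ _ => delayDistrib_natural, fun _ => delayDistrib_var,
    fun _ => delayDistrib_map_now, fun _ => delayDistrib_mu, fun _ => delayDistrib_map_mu,
    fun X => ?_⟩
  simp only [map_mu_delayDistrib_op_var, map_mu_delayDistrib_bang_var]
  exact ⟨Delay.bang_now, Delay.bang_step, Delay.op_now_now, Delay.op_step_left,
    Delay.op_step_right⟩
end
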